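/- arXiv:math/0002142 — 2 statements merged into one kernel-verified Lean document; each statement's English description precedes it below -/
import Mathlib

section
/- Let q : X → Y be a bounded linear surjection of Banach spaces. Then there exists a continuous (not necessarily linear) map s : Y → X with q ∘ s = id_Y (Bartle–Graves selection theorem). -/
/-!
By the open mapping theorem every `y` has a preimage of norm at most `C * ‖y‖`. A preimage of
`z ≠ 0` is still a preimage up to error `‖w‖ / 2`, of norm at most `2 * C * ‖w‖`, for all `w`
near `z`; these constraints are convex, so a partition of unity on `Y \ {0}` glues such local
choices into a continuous `u` with `‖q (u y) - y‖ ≤ ‖y‖ / 2` and `‖u y‖ ≤ 2 * C * ‖y‖`.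
The error map `g y = y - q (u y)` halves norms, so `s y = ∑ₙ u (gⁿ y)` converges locally
uniformly, and `q (s y)` telescopes to `y`.
-/

open Set Filter Topology Metric

theorem continuous_of_continuousOn_compl_zero_of_norm_le {E F : Type*} [NormedAddCommGroup E]
    [NormedAddCommGroup F] {f : E → F} {C : ℝ} (hf : ContinuousOn f {0}ᶜ)
    (hfC : ∀ y, ‖f y‖ ≤ C * ‖y‖) : Continuous f := by
  refine continuous_iff_continuousAt.2 fun y => ?_
  rcases eq_or_ne y 0 with rfl | hy
  · have hf0 : f 0 = 0 := norm_le_zero_iff.1 <| by simpa using hfC 0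
    rw [ContinuousAt, hf0, tendsto_zero_iff_norm_tendsto_zero]
    refine squeeze_zero (fun _ => norm_nonneg _) hfC ?_
    simpa using (tendsto_norm_zero (E := E)).const_mul C
  · exact hf.continuousAt (isOpen_compl_singleton.mem_nhds hy)

theorem norm_iterate_le_of_norm_le {E : Type*} [SeminormedAddCommGroup E] {g : E → E} {c : ℝ}
    (hc : 0 ≤ c) (hg : ∀ y, ‖g y‖ ≤ c * ‖y‖) (n : ℕ) (y : E) : ‖g^[n] y‖ ≤ c ^ n * ‖y‖ := by
  induction n with
  | zero => simp
  | succ n ih =>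
    calc ‖g^[n + 1] y‖ = ‖g (g^[n] y)‖ := by rw [Function.iterate_succ_apply']
      _ ≤ c * (c ^ n * ‖y‖) := (hg _).trans (mul_le_mul_of_nonneg_left ih hc)
      _ = c ^ (n + 1) * ‖y‖ := by ring

section

variable {X Y : Type*} [NormedAddCommGroup X] [NormedAddCommGroup Y]

section Real

variable [NormedSpace ℝ X] [NormedSpace ℝ Y]

def LinearMap.approxPreimage (q : X →ₗ[ℝ] Y) (C : ℝ) (y : Y) : Set X :=
  q ⁻¹' closedBall y (‖y‖ / 2) ∩ closedBall 0 (2 * C * ‖y‖)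

theorem LinearMap.convex_approxPreimage (q : X →ₗ[ℝ] Y) (C : ℝ) (y : Y) :
    Convex ℝ (q.approxPreimage C y) :=
  ((convex_closedBall _ _).linear_preimage q).inter (convex_closedBall _ _)

theorem LinearMap.eventually_mem_approxPreimage (q : X →ₗ[ℝ] Y) {C : ℝ} (hC0 : 0 ≤ C) {x : X}
    {z : Y} (hz : z ≠ 0) (hqx : q x = z) (hx : ‖x‖ ≤ C * ‖z‖) :
    ∀ᶠ w in 𝓝 z, x ∈ q.approxPreimage C w := by
  have hz0 : 0 < ‖z‖ := norm_pos_iff.2 hz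
  have h1 : ∀ᶠ w in 𝓝 z, ‖w - z‖ < ‖w‖ / 2 :=
    (tendsto_norm_sub_self z).eventually_lt ((tendsto_norm (x := z)).div_const 2) (by linarith)
  have h2 : ∀ᶠ w in 𝓝 z, ‖z‖ < 2 * ‖w‖ :=
    tendsto_const_nhds.eventually_lt ((tendsto_norm (x := z)).const_mul 2) (by linarith)
  filter_upwards [h1, h2] with w hw1 hw2
  refine ⟨?_, ?_⟩
  · rw [mem_preimage, mem_closedBall, dist_eq_norm, hqx, norm_sub_rev]
    exact hw1.le
  · rw [mem_closedBall, dist_zero_right]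
    nlinarith

theorem LinearMap.exists_continuous_approx_rightInverse (q : X →ₗ[ℝ] Y) {C : ℝ} (hC0 : 0 ≤ C)
    (hC : ∀ y, ∃ x, q x = y ∧ ‖x‖ ≤ C * ‖y‖) :
    ∃ u : Y → X, Continuous u ∧ ∀ y, ‖q (u y) - y‖ ≤ ‖y‖ / 2 ∧ ‖u y‖ ≤ 2 * C * ‖y‖ := by
  classical
  have hloc : ∀ z : ({0}ᶜ : Set Y), ∃ x,
      ∀ᶠ w : ({0}ᶜ : Set Y) in 𝓝 z, x ∈ q.approxPreimage C w := fun z =>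
    let ⟨x, hqx, hx⟩ := hC z
    ⟨x, (continuous_subtype_val.tendsto z).eventually
      (q.eventually_mem_approxPreimage hC0 z.2 hqx hx)⟩
  obtain ⟨g, hg⟩ := exists_continuous_forall_mem_convex_of_local_const
    (fun _ => q.convex_approxPreimage C _) hloc
  set u : Y → X := fun y => if h : y = 0 then 0 else g ⟨y, h⟩
  have hu : ∀ y, ‖q (u y) - y‖ ≤ ‖y‖ / 2 ∧ ‖u y‖ ≤ 2 * C * ‖y‖ := by
    intro y
    rcases eq_or_ne y 0 with rfl | hy
    · simp [u]
    · simpa [u, hy, LinearMap.approxPreimage, dist_eq_norm] using hg ⟨y, hy⟩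
  refine ⟨u, continuous_of_continuousOn_compl_zero_of_norm_le ?_ fun y => (hu y).2, hu⟩
  rw [continuousOn_iff_continuous_domRestrict]
  convert g.continuous using 1
  ext ⟨y, hy⟩
  simp [u, show y ≠ 0 from hy]

end Real

theorem ContinuousLinearMap.exists_continuous_rightInverse_of_approx {𝕜 : Type*} [NormedField 𝕜]
    [NormedSpace 𝕜 X] [NormedSpace 𝕜 Y] [CompleteSpace X] (q : X →L[𝕜] Y) {u : Y → X} {C : ℝ}
    (hu : Continuous u) (hC0 : 0 ≤ C) (hqu : ∀ y, ‖q (u y) - y‖ ≤ ‖y‖ / 2)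
    (huC : ∀ y, ‖u y‖ ≤ C * ‖y‖) :
    ∃ s : Y → X, Continuous s ∧ ∀ y, q (s y) = y := by
  set g : Y → Y := fun y => y - q (u y) with hg_def
  have hg : Continuous g := continuous_id.sub (q.continuous.comp hu)
  have hgy : ∀ y, ‖g y‖ ≤ 1 / 2 * ‖y‖ := fun y => by
    rw [hg_def, norm_sub_rev]
    linarith [hqu y]
  have hterm : ∀ n y, ‖u (g^[n] y)‖ ≤ C * ‖y‖ * (1 / 2) ^ n := fun n y =>
    calc ‖u (g^[n] y)‖ ≤ C * ‖g^[n] y‖ := huC _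
      _ ≤ C * ((1 / 2) ^ n * ‖y‖) :=
        mul_le_mul_of_nonneg_left (norm_iterate_le_of_norm_le (by norm_num) hgy n y) hC0
      _ = C * ‖y‖ * (1 / 2) ^ n := by ring
  have hsum : ∀ y, Summable fun n => u (g^[n] y) := fun y =>
    Summable.of_norm_bounded (summable_geometric_two.mul_left (C * ‖y‖)) (hterm · y)
  refine ⟨fun y => ∑' n, u (g^[n] y), ?_, fun y => ?_⟩
  · refine continuous_iff_continuousAt.2 fun y₀ => ?_
    have hball : ContinuousOn (fun y => ∑' n, u (g^[n] y)) (ball 0 (‖y₀‖ + 1)) :=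
      continuousOn_tsum (fun n => (hu.comp (hg.iterate n)).continuousOn)
        (summable_geometric_two.mul_left (C * (‖y₀‖ + 1))) fun n y hy =>
          (hterm n y).trans (by gcongr; exact (mem_ball_zero_iff.1 hy).le)
    exact hball.continuousAt (isOpen_ball.mem_nhds (by simp))
  · have hstep : ∀ n, q (u (g^[n] y)) = g^[n] y - g^[n + 1] y := fun n => by
      rw [Function.iterate_succ_apply', hg_def, sub_sub_cancel]
    have hpartial : ∀ N, ∑ n ∈ Finset.range N, q (u (g^[n] y)) = y - g^[N] y := fun N => by
      simp only [hstep, Finset.sum_range_sub', Function.iterate_zero_apply]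
    have hlim : Tendsto (fun N => g^[N] y) atTop (𝓝 0) := by
      refine tendsto_zero_iff_norm_tendsto_zero.2 <| squeeze_zero (fun _ => norm_nonneg _)
        (fun N => norm_iterate_le_of_norm_le (by norm_num) hgy N y) ?_
      simpa using (tendsto_pow_atTop_nhds_zero_of_lt_one (r := (1 / 2 : ℝ)) (by norm_num)
        (by norm_num)).mul_const ‖y‖
    rw [q.map_tsum (hsum y)]
    refine tendsto_nhds_unique (q.summable (hsum y)).hasSum.tendsto_sum_nat ?_
    simpa [hpartial] using tendsto_const_nhds.sub hlim
end

/-- Bartle–Graves selection theorem: a bounded linear surjection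
`q : X → Y` of Banach spaces admits a continuous (not necessarily linear)
right inverse `s : Y → X`. -/
theorem stmt9 {𝕜 X Y : Type*} [RCLike 𝕜]
    [NormedAddCommGroup X] [NormedSpace 𝕜 X] [CompleteSpace X]
    [NormedAddCommGroup Y] [NormedSpace 𝕜 Y] [CompleteSpace Y]
    (q : X →L[𝕜] Y) (hq : Function.Surjective q) :
    ∃ s : Y → X, Continuous s ∧ ∀ y : Y, q (s y) = y := by
  obtain ⟨C, hC0, hC⟩ := q.exists_preimage_norm_le hq
  let : NormedSpace ℝ X := NormedSpace.restrictScalars ℝ 𝕜 X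
  let : NormedSpace ℝ Y := NormedSpace.restrictScalars ℝ 𝕜 Y
  obtain ⟨u, hu, hqu⟩ :=
    (q.restrictScalars ℝ : X →ₗ[ℝ] Y).exists_continuous_approx_rightInverse hC0.le hC
  exact q.exists_continuous_rightInverse_of_approx hu (by positivity) (fun y => (hqu y).1)
    fun y => (hqu y).2
end

section
/- Let (φ_n)_{n∈ℕ} : A → C be a discrete asymptotic homomorphism between C*-algebras satisfying ‖φ_{n+1}(a) − φ_n(a)‖ → 0 for all a ∈ A, and let (m_n)_{n∈ℕ} be any sequence of positive integers. Then the reparametrized sequence (φ_1, …, φ_1 (m_1 times), φ_2, …, φ_2 (m_2 times), φ_3, …) is again a discrete asymptotic homomorphism satisfying the same condition ‖ψ_{k+1}(a) − ψ_k(a)‖ → 0, and it is homotopic to (φ_n) in the class of such discrete asymptotic homomorphisms. -/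
open Filter

section AsymptoticAux

/-- clamp a real number to `[0,1]` -/
noncomputable def clamp01 (x : ℝ) : ℝ := min 1 (max 0 x)

lemma clamp01_nonneg (x : ℝ) : 0 ≤ clamp01 x := le_min zero_le_one (le_max_left 0 x)
lemma clamp01_le_one (x : ℝ) : clamp01 x ≤ 1 := min_le_left _ _
lemma clamp01_of_nonpos {x : ℝ} (h : x ≤ 0) : clamp01 x = 0 := by
  unfold clamp01; rw [max_eq_left h, min_eq_right zero_le_one]
lemma clamp01_of_one_le {x : ℝ} (h : 1 ≤ x) : clamp01 x = 1 := by
  unfold clamp01; rw [max_eq_right (le_trans zero_le_one h), min_eq_left h]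
lemma clamp01_of_mem {x : ℝ} (h0 : 0 ≤ x) (h1 : x ≤ 1) : clamp01 x = x := by
  unfold clamp01; rw [max_eq_right h0, min_eq_right h1]
lemma clamp01_continuous : Continuous clamp01 :=
  (continuous_const.min (continuous_const.max continuous_id))

variable {C : Type*} [NonUnitalNormedRing C] [NormedSpace ℂ C]

/-- Multiplication in `C` automatically commutes with real scalars (rational case). -/
theorem ratC_smul_mul (q : ℚ) (u v : C) : ((q:ℂ) • u) * v = (q:ℂ) • (u * v) := by
  have hden : ((q.den : ℂ)) ≠ 0 := by
    exact_mod_cast Nat.cast_ne_zero.mpr q.den_nz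
  have hint : ∀ (n : ℤ) (x y : C), ((n:ℂ) • x) * y = (n:ℂ) • (x * y) := by
    intro n x y
    rw [Int.cast_smul_eq_zsmul, Int.cast_smul_eq_zsmul]
    exact smul_mul_assoc n x y
  have key : ((q.den:ℂ)) • (((q:ℂ) • u) * v) = ((q.den:ℂ)) • ((q:ℂ) • (u * v)) := by
    have h1 : ((q.den:ℂ)) • (((q:ℂ) • u) * v) = (((q.den:ℂ)) • ((q:ℂ) • u)) * v := by
      have := hint (q.den : ℤ) ((q:ℂ) • u) v
      push_cast at this
      rw [this]
    rw [h1, smul_smul, smul_smul]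
    have hnum : ((q.den:ℂ)) * (q:ℂ) = (q.num:ℂ) := by rw [Rat.cast_def]; field_simp
    rw [hnum]
    have := hint q.num u v
    rw [this]
  have := congrArg (fun z => ((q.den:ℂ))⁻¹ • z) key
  simpa [inv_smul_smul₀ hden] using this

/-- Multiplication in `C` automatically commutes with real scalars (left). -/
theorem realC_smul_mul (s : ℝ) (u v : C) : ((s:ℂ) • u) * v = (s:ℂ) • (u * v) := by
  have h1 : Continuous fun t : ℝ => ((t:ℂ) • u) * v :=
    ((Complex.continuous_ofReal.smul continuous_const).mul continuous_const)
  have h2 : Continuous fun t : ℝ => (t:ℂ) • (u * v) :=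
    Complex.continuous_ofReal.smul continuous_const
  have hd : DenseRange ((↑) : ℚ → ℝ) := Rat.denseRange_cast
  have heq : (fun t : ℝ => ((t:ℂ) • u) * v) ∘ ((↑) : ℚ → ℝ)
      = (fun t : ℝ => (t:ℂ) • (u * v)) ∘ ((↑) : ℚ → ℝ) := by
    funext q
    simp only [Function.comp_apply]
    push_cast
    exact ratC_smul_mul q u v
  exact congrFun (hd.equalizer h1 h2 heq) s

/-- Multiplication in `C` automatically commutes with real scalars (right). -/
theorem mul_realC_smul (s : ℝ) (u v : C) : u * ((s:ℂ) • v) = (s:ℂ) • (u * v) := by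
  have hint : ∀ (n : ℤ) (x y : C), x * ((n:ℂ) • y) = (n:ℂ) • (x * y) := by
    intro n x y
    rw [Int.cast_smul_eq_zsmul, Int.cast_smul_eq_zsmul]
    exact mul_smul_comm n x y
  have hq : ∀ (q : ℚ) (x y : C), x * ((q:ℂ) • y) = (q:ℂ) • (x * y) := by
    intro q x y
    have hden : ((q.den : ℂ)) ≠ 0 := by exact_mod_cast Nat.cast_ne_zero.mpr q.den_nz
    have key : ((q.den:ℂ)) • (x * ((q:ℂ) • y)) = ((q.den:ℂ)) • ((q:ℂ) • (x * y)) := by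
      have h1 := hint (q.den : ℤ) x ((q:ℂ) • y)
      push_cast at h1
      rw [← h1, smul_smul]
      have hnum : ((q.den:ℂ)) * (q:ℂ) = (q.num:ℂ) := by rw [Rat.cast_def]; field_simp
      rw [hnum, hint q.num x y, smul_smul, hnum]
    have := congrArg (fun z => ((q.den:ℂ))⁻¹ • z) key
    simpa [inv_smul_smul₀ hden] using this
  have h1 : Continuous fun t : ℝ => u * ((t:ℂ) • v) :=
    continuous_const.mul (Complex.continuous_ofReal.smul continuous_const)
  have h2 : Continuous fun t : ℝ => (t:ℂ) • (u * v) :=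
    Complex.continuous_ofReal.smul continuous_const
  have hd : DenseRange ((↑) : ℚ → ℝ) := Rat.denseRange_cast
  have heq : (fun t : ℝ => u * ((t:ℂ) • v)) ∘ ((↑) : ℚ → ℝ)
      = (fun t : ℝ => (t:ℂ) • (u * v)) ∘ ((↑) : ℚ → ℝ) := by
    funext q
    simp only [Function.comp_apply]
    push_cast
    exact hq q u v
  exact congrFun (hd.equalizer h1 h2 heq) s

/-- the key convexity cancellation identity -/
lemma key_identity (s : ℝ) (u u' v v' w w' : C) :
    (((1 - s : ℝ)) : ℂ) • w + ((s : ℝ) : ℂ) • w'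
      - ((((1 - s : ℝ)) : ℂ) • u + ((s : ℝ) : ℂ) • u') * ((((1 - s : ℝ)) : ℂ) • v + ((s : ℝ) : ℂ) • v')
    = (((1 - s : ℝ)) : ℂ) • (w - u * v) + ((s : ℝ) : ℂ) • (w' - u' * v')
      + (((s * (1 - s) : ℝ)) : ℂ) • ((u - u') * (v - v')) := by
  have exp : ∀ (α β : ℝ) (x y : C),
      (((α : ℝ) : ℂ) • x) * (((β : ℝ) : ℂ) • y) = (((α * β : ℝ)) : ℂ) • (x * y) := by
    intro α β x y
    rw [realC_smul_mul, mul_realC_smul, smul_smul, ← Complex.ofReal_mul]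
  have hprod : (u - u') * (v - v') = u*v - u*v' - (u'*v - u'*v') := by
    rw [sub_mul, mul_sub, mul_sub]
  rw [add_mul, mul_add, mul_add, exp, exp, exp, exp, hprod]
  push_cast
  match_scalars <;> ring
/-- piecewise linear interpolation of the sequence `u`, with `K` segments -/
noncomputable def interpF (u : ℕ → C) (K : ℕ) (x : ℝ) : C :=
  u 0 + ∑ j ∈ Finset.range K, ((clamp01 (x - j) : ℝ) : ℂ) • (u (j+1) - u j)

lemma interpF_continuous (u : ℕ → C) (K : ℕ) : Continuous fun x => interpF u K x := by
  refine continuous_const.add (continuous_finset_sum _ fun j _ => ?_)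
  exact (Complex.continuous_ofReal.comp
    (clamp01_continuous.comp (continuous_id.sub continuous_const))).smul continuous_const

lemma interpF_nat (u : ℕ → C) {K i : ℕ} (hiK : i ≤ K) : interpF u K (i : ℝ) = u i := by
  unfold interpF
  have hsplit : ∑ j ∈ Finset.range K, ((clamp01 ((i:ℝ) - j) : ℝ) : ℂ) • (u (j+1) - u j)
      = ∑ j ∈ Finset.range i, ((clamp01 ((i:ℝ) - j) : ℝ) : ℂ) • (u (j+1) - u j)
        + ∑ j ∈ Finset.Ico i K, ((clamp01 ((i:ℝ) - j) : ℝ) : ℂ) • (u (j+1) - u j) := by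
    rw [Finset.range_eq_Ico, ← Finset.sum_Ico_consecutive _ (Nat.zero_le i) hiK,
      ← Finset.range_eq_Ico]
  rw [hsplit]
  have h1 : ∑ j ∈ Finset.range i, ((clamp01 ((i:ℝ) - j) : ℝ) : ℂ) • (u (j+1) - u j)
      = ∑ j ∈ Finset.range i, (u (j+1) - u j) := by
    refine Finset.sum_congr rfl fun j hj => ?_
    rw [Finset.mem_range] at hj
    have : (1:ℝ) ≤ (i:ℝ) - j := by
      have : (j:ℝ) + 1 ≤ (i:ℝ) := by exact_mod_cast Nat.succ_le_of_lt hj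
      linarith
    rw [clamp01_of_one_le this, Complex.ofReal_one, one_smul]
  have h2 : ∑ j ∈ Finset.Ico i K, ((clamp01 ((i:ℝ) - j) : ℝ) : ℂ) • (u (j+1) - u j) = 0 := by
    refine Finset.sum_eq_zero fun j hj => ?_
    rw [Finset.mem_Ico] at hj
    have : (i:ℝ) - j ≤ 0 := by
      have : (i:ℝ) ≤ (j:ℝ) := by exact_mod_cast hj.1
      linarith
    rw [clamp01_of_nonpos this, Complex.ofReal_zero, zero_smul]
  rw [h1, h2, Finset.sum_range_sub u]
  abel

lemma interpF_succ_of_le (u : ℕ → C) {K : ℕ} {x : ℝ} (hx : x ≤ K) :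
    interpF u (K+1) x = interpF u K x := by
  unfold interpF
  rw [Finset.sum_range_succ]
  have : x - K ≤ 0 := by linarith
  rw [clamp01_of_nonpos this, Complex.ofReal_zero, zero_smul, add_zero]

/-- representation of the interpolation as a convex combination of adjacent values;
the pair `(i, s)` does not depend on the sequence. -/
lemma interpF_rep (K : ℕ) (x : ℝ) (h0 : 0 ≤ x) (hK : x ≤ K) :
    ∃ (i : ℕ) (s : ℝ), 0 ≤ s ∧ s ≤ 1 ∧ x - 1 ≤ (i:ℝ) ∧ (i:ℝ) ≤ x ∧
      ∀ u : ℕ → C, interpF u K x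
        = (((1 - s : ℝ)) : ℂ) • u i + ((s : ℝ) : ℂ) • u (i+1) := by
  -- main computation for i ≤ x ≤ i+1, i < K
  have main : ∀ (i : ℕ), i < K → (i:ℝ) ≤ x → x ≤ (i:ℝ) + 1 →
      ∀ u : ℕ → C, interpF u K x
        = (((1 - (x - i) : ℝ)) : ℂ) • u i + (((x - i : ℝ)) : ℂ) • u (i+1) := by
    intro i hiK hix hxi u
    unfold interpF
    have hsub : Finset.range (i+1) ⊆ Finset.range K := by
      intro j hj; rw [Finset.mem_range] at *; omega
    have hvanish : ∀ j ∈ Finset.range K, j ∉ Finset.range (i+1) →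
        ((clamp01 (x - j) : ℝ) : ℂ) • (u (j+1) - u j) = 0 := by
      intro j _ hj
      rw [Finset.mem_range] at hj
      have hij : (i:ℝ) + 1 ≤ (j:ℝ) := by exact_mod_cast Nat.succ_le_of_lt (by omega)
      have : x - j ≤ 0 := by linarith
      rw [clamp01_of_nonpos this, Complex.ofReal_zero, zero_smul]
    rw [← Finset.sum_subset hsub hvanish, Finset.sum_range_succ]
    have h1 : ∑ j ∈ Finset.range i, ((clamp01 (x - j) : ℝ) : ℂ) • (u (j+1) - u j)
        = ∑ j ∈ Finset.range i, (u (j+1) - u j) := by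
      refine Finset.sum_congr rfl fun j hj => ?_
      rw [Finset.mem_range] at hj
      have : (j:ℝ) + 1 ≤ (i:ℝ) := by exact_mod_cast Nat.succ_le_of_lt hj
      rw [clamp01_of_one_le (by linarith), Complex.ofReal_one, one_smul]
    have h2 : clamp01 (x - i) = x - i := clamp01_of_mem (by linarith) (by linarith)
    rw [h1, h2, Finset.sum_range_sub u]
    push_cast
    have : ((1:ℂ) - ((x:ℂ) - (i:ℂ))) • u i = u i - ((x:ℂ) - (i:ℂ)) • u i := by
      rw [sub_smul, one_smul]
    rw [this, smul_sub]
    abel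
  rcases Nat.eq_zero_or_pos K with hK0 | hKpos
  · subst hK0
    have hx0 : x = 0 := le_antisymm (by exact_mod_cast hK) h0
    refine ⟨0, 0, le_refl 0, zero_le_one, by simp [hx0], by simp [hx0], fun u => ?_⟩
    subst hx0
    simp [interpF]
  · by_cases hfl : ⌊x⌋₊ < K
    · refine ⟨⌊x⌋₊, x - ⌊x⌋₊, ?_, ?_, ?_, ?_, ?_⟩
      · have := Nat.floor_le h0; linarith
      · have := Nat.lt_floor_add_one x; linarith
      · have := Nat.lt_floor_add_one x; linarith
      · exact Nat.floor_le h0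
      · intro u
        exact main ⌊x⌋₊ hfl (Nat.floor_le h0) (le_of_lt (Nat.lt_floor_add_one x)) u
    · -- then x = K
      push_neg at hfl
      have hxK : x = K := by
        have h1 : (K:ℝ) ≤ ⌊x⌋₊ := by exact_mod_cast hfl
        have h2 : (⌊x⌋₊:ℝ) ≤ x := Nat.floor_le h0
        linarith
      refine ⟨K - 1, 1, zero_le_one, le_refl 1, ?_, ?_, fun u => ?_⟩
      · have : ((K - 1 : ℕ):ℝ) = (K:ℝ) - 1 := by
          have : (1:ℕ) ≤ K := hKpos
          push_cast [Nat.cast_sub this]; ring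
        rw [this, hxK]
      · have : ((K - 1 : ℕ):ℝ) = (K:ℝ) - 1 := by
          have : (1:ℕ) ≤ K := hKpos
          push_cast [Nat.cast_sub this]; ring
        rw [this, hxK]; linarith
      · have hc : ((K-1:ℕ):ℝ) = (K:ℝ) - 1 := by
          have : (1:ℕ) ≤ K := hKpos
          push_cast [Nat.cast_sub this]; ring
        have := main (K-1) (by omega) (by rw [hc, hxK]; linarith) (by rw [hc, hxK]; linarith) u
        rw [this, hc, hxK]
        norm_num

variable [StarRing C] [StarModule ℂ C]

set_option linter.unusedSectionVars false

-- linearity in the sequence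
lemma interpF_sub (u v : ℕ → C) (K : ℕ) (x : ℝ) :
    interpF (fun j => u j - v j) K x = interpF u K x - interpF v K x := by
  unfold interpF
  simp only
  have : ∀ j ∈ Finset.range K,
      ((clamp01 (x - j) : ℝ) : ℂ) • (u (j+1) - v (j+1) - (u j - v j))
      = ((clamp01 (x - j) : ℝ) : ℂ) • (u (j+1) - u j) - ((clamp01 (x - j) : ℝ) : ℂ) • (v (j+1) - v j) := by
    intro j _
    rw [← smul_sub]
    congr 1
    abel
  rw [Finset.sum_congr rfl this, Finset.sum_sub_distrib]
  abel

lemma interpF_smul (c : ℂ) (u : ℕ → C) (K : ℕ) (x : ℝ) :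
    interpF (fun j => c • u j) K x = c • interpF u K x := by
  unfold interpF
  rw [smul_add, Finset.smul_sum]
  congr 1
  refine Finset.sum_congr rfl fun j _ => ?_
  rw [← smul_sub, smul_comm]

lemma interpF_star (u : ℕ → C) (K : ℕ) (x : ℝ) :
    interpF (fun j => star (u j)) K x = star (interpF u K x) := by
  unfold interpF
  rw [star_add, star_sum]
  congr 1
  refine Finset.sum_congr rfl fun j _ => ?_
  rw [star_smul, star_sub]
  congr 1
  simp [Complex.star_def, Complex.conj_ofReal]

-- L1 : bound for a sequence with small norms in the window
lemma interpF_norm_le {L : ℕ → C} {K N : ℕ} {x : ℝ} {ε : ℝ}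
    (h0 : 0 ≤ x) (hK : x ≤ K) (hN : ((N:ℝ)) ≤ x)
    (hL : ∀ j, N ≤ j + 1 → ‖L j‖ ≤ ε) :
    ‖interpF L K x‖ ≤ ε := by
  obtain ⟨i, s, hs0, hs1, hxi, hix, hrep⟩ := interpF_rep (C := C) K x h0 hK
  have hNi : N ≤ i + 1 := by
    have : (N:ℝ) - 1 ≤ (i:ℝ) := by linarith
    have : (N:ℝ) ≤ (i:ℝ) + 1 := by linarith
    exact_mod_cast this
  have hNi' : N ≤ (i + 1) + 1 := by omega
  rw [hrep L]
  calc ‖(((1 - s : ℝ)) : ℂ) • L i + ((s : ℝ) : ℂ) • L (i+1)‖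
      ≤ ‖(((1 - s : ℝ)) : ℂ) • L i‖ + ‖((s : ℝ) : ℂ) • L (i+1)‖ := norm_add_le _ _
    _ ≤ (1 - s) * ε + s * ε := by
        gcongr
        · rw [norm_smul, Complex.norm_real, Real.norm_eq_abs, abs_of_nonneg (by linarith)]
          have := hL i hNi
          calc (1-s) * ‖L i‖ ≤ (1-s) * ε := by
                have h01 : (0:ℝ) ≤ 1 - s := by linarith
                exact mul_le_mul_of_nonneg_left this h01
            _ = (1-s) * ε := rfl
        · rw [norm_smul, Complex.norm_real, Real.norm_eq_abs, abs_of_nonneg hs0]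
          exact mul_le_mul_of_nonneg_left (hL (i+1) hNi') hs0
    _ = ε := by ring

-- L2 : multiplicative defect bound
lemma interpF_mul_defect_le {ua ub uab : ℕ → C} {K N : ℕ} {x : ℝ} {ε ε₁ ε₂ : ℝ}
    (h0 : 0 ≤ x) (hK : x ≤ K) (hN : ((N:ℝ)) ≤ x)
    (hδ : ∀ j, N ≤ j + 1 → ‖uab j - ua j * ub j‖ ≤ ε)
    (hda : ∀ j, N ≤ j + 1 → ‖ua (j+1) - ua j‖ ≤ ε₁)
    (hdb : ∀ j, N ≤ j + 1 → ‖ub (j+1) - ub j‖ ≤ ε₂)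
    (hε1 : 0 ≤ ε₁) (hε2 : 0 ≤ ε₂) :
    ‖interpF uab K x - interpF ua K x * interpF ub K x‖ ≤ ε + ε₁ * ε₂ := by
  obtain ⟨i, s, hs0, hs1, hxi, hix, hrep⟩ := interpF_rep (C := C) K x h0 hK
  have hNi : N ≤ i + 1 := by
    have h1 : (N:ℝ) ≤ (i:ℝ) + 1 := by linarith
    exact_mod_cast h1
  have hNi' : N ≤ (i + 1) + 1 := by omega
  rw [hrep uab, hrep ua, hrep ub, key_identity]
  have hb1 : ‖(((1 - s : ℝ)) : ℂ) • (uab i - ua i * ub i)‖ ≤ (1-s) * ε := by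
    rw [norm_smul, Complex.norm_real, Real.norm_eq_abs, abs_of_nonneg (by linarith)]
    exact mul_le_mul_of_nonneg_left (hδ i hNi) (by linarith)
  have hb2 : ‖((s : ℝ) : ℂ) • (uab (i+1) - ua (i+1) * ub (i+1))‖ ≤ s * ε := by
    rw [norm_smul, Complex.norm_real, Real.norm_eq_abs, abs_of_nonneg hs0]
    exact mul_le_mul_of_nonneg_left (hδ (i+1) hNi') hs0
  have hb3 : ‖(((s * (1 - s) : ℝ)) : ℂ) • ((ua i - ua (i+1)) * (ub i - ub (i+1)))‖
      ≤ (s * (1-s)) * (ε₁ * ε₂) := by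
    rw [norm_smul, Complex.norm_real, Real.norm_eq_abs,
      abs_of_nonneg (mul_nonneg hs0 (by linarith))]
    refine mul_le_mul_of_nonneg_left ?_ (mul_nonneg hs0 (by linarith))
    calc ‖(ua i - ua (i+1)) * (ub i - ub (i+1))‖
        ≤ ‖ua i - ua (i+1)‖ * ‖ub i - ub (i+1)‖ := norm_mul_le _ _
      _ ≤ ε₁ * ε₂ := by
          rw [norm_sub_rev, norm_sub_rev (ub i)]
          exact mul_le_mul (hda i hNi) (hdb i hNi) (norm_nonneg _) hε1
  calc ‖_ + _ + _‖ ≤ ‖_ + _‖ + ‖_‖ := norm_add_le _ _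
    _ ≤ ‖_‖ + ‖_‖ + ‖_‖ := by gcongr <;> exact norm_add_le _ _
    _ ≤ (1-s)*ε + s*ε + (s*(1-s))*(ε₁*ε₂) := by gcongr
    _ ≤ ε + ε₁ * ε₂ := by
        have hX : 0 ≤ ε₁ * ε₂ := mul_nonneg hε1 hε2
        have h4 : s * (1 - s) ≤ 1 := by nlinarith [sq_nonneg (s - 1/2)]
        have := mul_le_mul_of_nonneg_right h4 hX
        linarith

-- L3 : sliding window Lipschitz bound
lemma interpF_dist_le {u : ℕ → C} {K N : ℕ} {x y : ℝ} {ε : ℝ}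
    (hy0 : 0 ≤ y) (hNy : ((N:ℝ)) ≤ y) (hyx : y ≤ x) (hxy : x ≤ y + 1)
    (hε : ∀ j, N ≤ j → ‖u (j+1) - u j‖ ≤ ε) (hε0 : 0 ≤ ε) :
    ‖interpF u K x - interpF u K y‖ ≤ 2 * ε := by
  set i := ⌊y⌋₊ with hi
  have hNi : N ≤ i := Nat.le_floor hNy
  have hiy : (i:ℝ) ≤ y := Nat.floor_le hy0
  have hyi : y < (i:ℝ) + 1 := Nat.lt_floor_add_one y
  have hdiff : interpF u K x - interpF u K y
      = ∑ j ∈ Finset.range K,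
          (((clamp01 (x - j) - clamp01 (y - j) : ℝ)) : ℂ) • (u (j+1) - u j) := by
    unfold interpF
    rw [add_sub_add_left_eq_sub, ← Finset.sum_sub_distrib]
    refine Finset.sum_congr rfl fun j _ => ?_
    rw [← sub_smul, ← Complex.ofReal_sub]
  rw [hdiff]
  calc ‖∑ j ∈ Finset.range K, (((clamp01 (x - j) - clamp01 (y - j) : ℝ)) : ℂ) • (u (j+1) - u j)‖
      ≤ ∑ j ∈ Finset.range K, ‖(((clamp01 (x - j) - clamp01 (y - j) : ℝ)) : ℂ) • (u (j+1) - u j)‖ :=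
        norm_sum_le _ _
    _ ≤ ∑ j ∈ Finset.range K,
          ((if j = i then ε else 0) + (if j = i + 1 then ε else 0)) := by
        refine Finset.sum_le_sum fun j _ => ?_
        rw [norm_smul, Complex.norm_real, Real.norm_eq_abs]
        by_cases hji : j = i
        · simp only [if_pos hji]
          have h1 : |clamp01 (x - j) - clamp01 (y - j)| ≤ 1 := by
            rw [abs_sub_le_iff]
            constructor
            · have := clamp01_le_one (x - j); have := clamp01_nonneg (y - j); linarith
            · have := clamp01_le_one (y - j); have := clamp01_nonneg (x - j); linarith
          have h2 : ‖u (j+1) - u j‖ ≤ ε := hε j (by omega)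
          have hij : j ≠ i + 1 := by omega
          rw [if_neg hij]
          calc |clamp01 (x - j) - clamp01 (y - j)| * ‖u (j+1) - u j‖
              ≤ 1 * ε := mul_le_mul h1 h2 (norm_nonneg _) zero_le_one
            _ = ε + 0 := by ring
        · by_cases hji' : j = i + 1
          · simp only [if_neg hji, if_pos hji']
            have h1 : |clamp01 (x - j) - clamp01 (y - j)| ≤ 1 := by
              rw [abs_sub_le_iff]
              constructor
              · have := clamp01_le_one (x - j); have := clamp01_nonneg (y - j); linarith
              · have := clamp01_le_one (y - j); have := clamp01_nonneg (x - j); linarith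
            have h2 : ‖u (j+1) - u j‖ ≤ ε := hε j (by omega)
            
            calc |clamp01 (x - j) - clamp01 (y - j)| * ‖u (j+1) - u j‖
                ≤ 1 * ε := mul_le_mul h1 h2 (norm_nonneg _) zero_le_one
              _ = 0 + ε := by ring
          · -- clamp values agree
            have heq : clamp01 (x - j) = clamp01 (y - j) := by
              rcases Nat.lt_or_ge j i with hj | hj
              · -- j < i : both equal 1
                have hj1 : (j:ℝ) + 1 ≤ (i:ℝ) := by exact_mod_cast Nat.succ_le_of_lt hj
                rw [clamp01_of_one_le (by linarith), clamp01_of_one_le (by linarith)]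
              · -- j ≥ i+2 : both equal 0
                have hj2 : i + 2 ≤ j := by omega
                have hj2' : (i:ℝ) + 2 ≤ (j:ℝ) := by exact_mod_cast hj2
                rw [clamp01_of_nonpos (by linarith), clamp01_of_nonpos (by linarith)]
            rw [heq, sub_self, abs_zero, zero_mul, if_neg hji, if_neg hji']
            norm_num
    _ ≤ ε + ε := by
        rw [Finset.sum_add_distrib]
        gcongr
        · rw [Finset.sum_ite_eq' (Finset.range K) i (fun _ => ε)]
          split <;> simp [hε0, le_refl]
        · rw [Finset.sum_ite_eq' (Finset.range K) (i+1) (fun _ => ε)]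
          split <;> simp [hε0, le_refl]
    _ = 2 * ε := by ring
end AsymptoticAux
/-- The reparametrization of a sequence `φ` by repetition counts `m`: the term of
index `k` is `φ n` where `n` is least with `k < m 0 + ⋯ + m n`, i.e. the sequence
`φ 0, …, φ 0` (`m 0` times), `φ 1, …, φ 1` (`m 1` times), `φ 2, …`. -/
noncomputable def repIdx (m : ℕ → ℕ) (k : ℕ) : ℕ :=
  sInf {n | k < ∑ j ∈ Finset.range (n + 1), m j}

/-- a reparametrization of a discrete asymptotic homomorphism
satisfying Mishchenko's condition is again one, and is homotopic to the original
(via a discrete asymptotic homomorphism into `C ⊗ C[0,1] = C([0,1], C)`). -/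
theorem stmt15 {A C : Type*}
    [NonUnitalNormedRing A] [StarRing A] [CStarRing A] [NormedSpace ℂ A]
    [NonUnitalNormedRing C] [StarRing C] [CStarRing C] [NormedSpace ℂ C]
    [StarModule ℂ C]
    (φ : ℕ → A → C)
    (hmul : ∀ a b : A,
      Tendsto (fun n => ‖φ n (a * b) - φ n a * φ n b‖) atTop (nhds 0))
    (hlin : ∀ (a b : A) (lam : ℂ),
      Tendsto (fun n => ‖φ n (a + lam • b) - φ n a - lam • φ n b‖) atTop (nhds 0))
    (hstar : ∀ a : A,
      Tendsto (fun n => ‖φ n (star a) - star (φ n a)‖) atTop (nhds 0))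
    (hmish : ∀ a : A, Tendsto (fun n => ‖φ (n + 1) a - φ n a‖) atTop (nhds 0))
    (m : ℕ → ℕ) (hm : ∀ n, 1 ≤ m n) :
    (∀ a b : A, Tendsto (fun k =>
      ‖φ (repIdx m k) (a * b) - φ (repIdx m k) a * φ (repIdx m k) b‖)
      atTop (nhds 0)) ∧
    (∀ (a b : A) (lam : ℂ), Tendsto (fun k =>
      ‖φ (repIdx m k) (a + lam • b) - φ (repIdx m k) a - lam • φ (repIdx m k) b‖)
      atTop (nhds 0)) ∧
    (∀ a : A, Tendsto (fun k =>
      ‖φ (repIdx m k) (star a) - star (φ (repIdx m k) a)‖) atTop (nhds 0)) ∧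
    (∀ a : A, Tendsto (fun k =>
      ‖φ (repIdx m (k + 1)) a - φ (repIdx m k) a‖) atTop (nhds 0)) ∧
    (∃ Φ : ℕ → A → C(Set.Icc (0:ℝ) 1, C),
      (∀ a b : A, Tendsto (fun n =>
        ‖Φ n (a * b) - Φ n a * Φ n b‖) atTop (nhds 0)) ∧
      (∀ (a b : A) (lam : ℂ), Tendsto (fun n =>
        ‖Φ n (a + lam • b) - Φ n a - lam • Φ n b‖) atTop (nhds 0)) ∧
      (∀ a : A, Tendsto (fun n =>
        ‖Φ n (star a) - star (Φ n a)‖) atTop (nhds 0)) ∧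
      (∀ a : A, Tendsto (fun n =>
        ‖Φ (n + 1) a - Φ n a‖) atTop (nhds 0)) ∧
      (∀ n a, Φ n a ⟨0, by norm_num⟩ = φ n a) ∧
      (∀ n a, Φ n a ⟨1, by norm_num⟩ = φ (repIdx m n) a)) := by
  -- basic properties of repIdx
  set S : ℕ → ℕ := fun n => ∑ j ∈ Finset.range (n + 1), m j with hS
  have hSn : ∀ n, n < S n := by
    intro n
    have : n + 1 ≤ S n := by
      calc n + 1 = ∑ _j ∈ Finset.range (n+1), 1 := by
            rw [Finset.sum_const, Finset.card_range, smul_eq_mul, mul_one]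
        _ ≤ S n := Finset.sum_le_sum fun i _ => hm i
    omega
  have hmem : ∀ k, k ∈ {n | k < S n} := fun k => hSn k
  have hrle : ∀ k, repIdx m k ≤ k := fun k => Nat.sInf_le (hmem k)
  have hrspec : ∀ k, k < S (repIdx m k) := fun k => Nat.sInf_mem (Set.nonempty_of_mem (hmem k))
  have hrmono : ∀ k, repIdx m k ≤ repIdx m (k+1) := by
    intro k
    exact Nat.sInf_le (show k < S (repIdx m (k+1)) from lt_trans (Nat.lt_succ_self k) (hrspec (k+1)))
  have hrstep : ∀ k, repIdx m (k+1) ≤ repIdx m k + 1 := by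
    intro k
    refine Nat.sInf_le ?_
    show k + 1 < S (repIdx m k + 1)
    have h1 : S (repIdx m k + 1) = S (repIdx m k) + m (repIdx m k + 1) := by
      simp only [hS]
      rw [Finset.sum_range_succ]
    have := hrspec k
    have := hm (repIdx m k + 1)
    omega
  have hSmono : Monotone S := by
    intro i j hij
    exact Finset.sum_le_sum_of_subset (by
      intro x hx; rw [Finset.mem_range] at *; omega)
  have hrt : Tendsto (repIdx m) atTop atTop := by
    rw [tendsto_atTop_atTop]
    intro N
    refine ⟨S N, fun k hk => ?_⟩
    by_contra hcon
    push_neg at hcon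
    have h1 : repIdx m k ≤ N := by omega
    have := lt_of_lt_of_le (hrspec k) (hSmono h1)
    omega
  have hcase : ∀ k, repIdx m (k+1) = repIdx m k ∨ repIdx m (k+1) = repIdx m k + 1 := by
    intro k
    have := hrmono k; have := hrstep k; omega
  -- helper to extract ε-N data from tendsto hypotheses
  have hget : ∀ (f : ℕ → ℝ), Tendsto f atTop (nhds 0) → ∀ η : ℝ, 0 < η →
      ∃ N, ∀ j, N ≤ j → f j ≤ η := by
    intro f hf η hη
    obtain ⟨N, hN⟩ := Metric.tendsto_atTop.1 hf η hη
    exact ⟨N, fun j hj => by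
      have := hN j hj; rw [Real.dist_eq, sub_zero] at this
      exact le_of_lt (lt_of_le_of_lt (le_abs_self _) this)⟩
  have hwin : ∀ N : ℕ, ∃ K0, ∀ n, K0 ≤ n → N ≤ repIdx m n := by
    intro N
    obtain ⟨K0, h⟩ := tendsto_atTop_atTop.1 hrt N
    exact ⟨K0, fun n hn => h n hn⟩
  refine ⟨fun a b => (hmul a b).comp hrt, fun a b lam => (hlin a b lam).comp hrt,
    fun a => (hstar a).comp hrt, ?_, ?_⟩
  · -- Mishchenko for the reparametrized sequence
    intro a
    refine squeeze_zero (fun k => norm_nonneg _) ?_ ((hmish a).comp hrt)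
    intro k
    simp only [Function.comp_apply]
    rcases hcase k with h | h
    · rw [h, sub_self, norm_zero]
      exact norm_nonneg _
    · rw [h]
  · -- the homotopy
    classical
    -- the path parameter
    set g : ℕ → ℝ → ℝ := fun n τ => (n:ℝ) - τ * ((n:ℝ) - (repIdx m n : ℝ)) with hg
    have hgcont : ∀ n, Continuous fun t : Set.Icc (0:ℝ) 1 => g n t.1 := by
      intro n
      exact continuous_const.sub (continuous_subtype_val.mul continuous_const)
    have hrcast : ∀ n, ((repIdx m n : ℕ):ℝ) ≤ (n:ℝ) := by
      intro n; exact_mod_cast hrle n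
    have hg_ge : ∀ n (t : Set.Icc (0:ℝ) 1), ((repIdx m n : ℕ):ℝ) ≤ g n t.1 := by
      intro n t
      have ht0 : 0 ≤ t.1 := t.2.1
      have ht1 : t.1 ≤ 1 := t.2.2
      have := hrcast n
      simp only [hg]
      nlinarith
    have hg_le : ∀ n (t : Set.Icc (0:ℝ) 1), g n t.1 ≤ (n:ℝ) := by
      intro n t
      have ht0 : 0 ≤ t.1 := t.2.1
      have := hrcast n
      simp only [hg]
      nlinarith
    have hg_nonneg : ∀ n (t : Set.Icc (0:ℝ) 1), 0 ≤ g n t.1 := by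
      intro n t
      have h1 := hg_ge n t
      have h2 : (0:ℝ) ≤ ((repIdx m n : ℕ):ℝ) := Nat.cast_nonneg _
      linarith
    refine ⟨fun n a => ⟨fun t => interpF (fun j => φ j a) n (g n t.1),
      by exact (interpF_continuous (fun j => φ j a) n).comp (hgcont n)⟩, ?_, ?_, ?_, ?_, ?_, ?_⟩
    · -- multiplicativity
      intro a b
      rw [Metric.tendsto_atTop]
      intro δ hδ
      set η : ℝ := min (δ/3) 1 with hη
      have hηpos : 0 < η := lt_min (by linarith) one_pos
      obtain ⟨N₁, hN₁⟩ := hget _ (hmul a b) η hηpos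
      obtain ⟨N₂, hN₂⟩ := hget _ (hmish a) η hηpos
      obtain ⟨N₃, hN₃⟩ := hget _ (hmish b) η hηpos
      obtain ⟨K0, hK0⟩ := hwin (N₁ + N₂ + N₃ + 1)
      refine ⟨K0, fun n hn => ?_⟩
      rw [Real.dist_eq, sub_zero, abs_of_nonneg (norm_nonneg _)]
      have hNr : N₁ + N₂ + N₃ + 1 ≤ repIdx m n := hK0 n hn
      refine lt_of_le_of_lt ((ContinuousMap.norm_le _
        (show (0:ℝ) ≤ η + η * η by positivity)).2 fun t => ?_) ?_
      · simp only [ContinuousMap.sub_apply, ContinuousMap.mul_apply, ContinuousMap.coe_mk]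
        refine interpF_mul_defect_le (N := N₁ + N₂ + N₃ + 1) (hg_nonneg n t) (hg_le n t)
          (le_trans (Nat.cast_le.mpr hNr) (hg_ge n t)) ?_ ?_ ?_
          (le_of_lt hηpos) (le_of_lt hηpos)
        · intro j hj
          exact hN₁ j (by omega)
        · intro j hj
          exact hN₂ j (by omega)
        · intro j hj
          exact hN₃ j (by omega)
      · have h1 : η ≤ δ/3 := min_le_left _ _
        have h2 : η ≤ 1 := min_le_right _ _
        nlinarith
    · -- linearity
      intro a b lam
      rw [Metric.tendsto_atTop]
      intro δ hδ
      have hδ2 : 0 < δ/2 := by linarith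
      obtain ⟨N₁, hN₁⟩ := hget _ (hlin a b lam) (δ/2) hδ2
      obtain ⟨K0, hK0⟩ := hwin (N₁ + 1)
      refine ⟨K0, fun n hn => ?_⟩
      rw [Real.dist_eq, sub_zero, abs_of_nonneg (norm_nonneg _)]
      have hNr : N₁ + 1 ≤ repIdx m n := hK0 n hn
      refine lt_of_le_of_lt ((ContinuousMap.norm_le _ (le_of_lt hδ2)).2 fun t => ?_)
        (by linarith : δ/2 < δ)
      simp only [ContinuousMap.sub_apply, ContinuousMap.smul_apply, ContinuousMap.coe_mk]
      rw [← interpF_smul, ← interpF_sub, ← interpF_sub]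
      refine interpF_norm_le (N := N₁ + 1) (hg_nonneg n t) (hg_le n t)
        (le_trans (Nat.cast_le.mpr hNr) (hg_ge n t)) ?_
      intro j hj
      exact hN₁ j (by omega)
    · -- star
      intro a
      rw [Metric.tendsto_atTop]
      intro δ hδ
      have hδ2 : 0 < δ/2 := by linarith
      obtain ⟨N₁, hN₁⟩ := hget _ (hstar a) (δ/2) hδ2
      obtain ⟨K0, hK0⟩ := hwin (N₁ + 1)
      refine ⟨K0, fun n hn => ?_⟩
      rw [Real.dist_eq, sub_zero, abs_of_nonneg (norm_nonneg _)]
      have hNr : N₁ + 1 ≤ repIdx m n := hK0 n hn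
      refine lt_of_le_of_lt ((ContinuousMap.norm_le _ (le_of_lt hδ2)).2 fun t => ?_)
        (by linarith : δ/2 < δ)
      simp only [ContinuousMap.sub_apply, ContinuousMap.star_apply, ContinuousMap.coe_mk]
      rw [← interpF_star, ← interpF_sub]
      refine interpF_norm_le (N := N₁ + 1) (hg_nonneg n t) (hg_le n t)
        (le_trans (Nat.cast_le.mpr hNr) (hg_ge n t)) ?_
      intro j hj
      exact hN₁ j (by omega)
    · -- Mishchenko for the homotopy
      intro a
      rw [Metric.tendsto_atTop]
      intro δ hδ
      have hδ3 : 0 < δ/3 := by linarith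
      obtain ⟨N₁, hN₁⟩ := hget _ (hmish a) (δ/3) hδ3
      obtain ⟨K0, hK0⟩ := hwin N₁
      refine ⟨K0, fun n hn => ?_⟩
      rw [Real.dist_eq, sub_zero, abs_of_nonneg (norm_nonneg _)]
      have hNr : N₁ ≤ repIdx m n := hK0 n hn
      refine lt_of_le_of_lt ((ContinuousMap.norm_le _
        (show (0:ℝ) ≤ 2 * (δ/3) by linarith)).2 fun t => ?_) (by linarith : 2 * (δ/3) < δ)
      · simp only [ContinuousMap.sub_apply, ContinuousMap.coe_mk]
        have hyn : g n t.1 ≤ (n:ℝ) := hg_le n t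
        rw [← interpF_succ_of_le (fun j => φ j a) hyn]
        refine interpF_dist_le (N := N₁) (hg_nonneg n t) ?_ ?_ ?_ ?_ (le_of_lt hδ3)
        · exact le_trans (Nat.cast_le.mpr hNr) (hg_ge n t)
        · -- g n t ≤ g (n+1) t
          have ht0 : 0 ≤ t.1 := t.2.1
          have ht1 : t.1 ≤ 1 := t.2.2
          rcases hcase n with h | h
          · simp only [hg, h]
            push_cast
            nlinarith
          · simp only [hg, h]
            push_cast
            nlinarith
        · -- g (n+1) t ≤ g n t + 1
          have ht0 : 0 ≤ t.1 := t.2.1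
          have ht1 : t.1 ≤ 1 := t.2.2
          rcases hcase n with h | h
          · simp only [hg, h]
            push_cast
            nlinarith
          · simp only [hg, h]
            push_cast
            nlinarith
        · intro j hj
          exact hN₁ j (by omega)
    · -- value at 0
      intro n a
      simp only [ContinuousMap.coe_mk]
      have hx : g n (0:ℝ) = ((n:ℕ):ℝ) := by simp [hg]
      rw [hx]
      exact interpF_nat _ (le_refl n)
    · -- value at 1
      intro n a
      simp only [ContinuousMap.coe_mk]
      have hx : g n (1:ℝ) = ((repIdx m n : ℕ):ℝ) := by simp [hg]
      rw [hx]
      exact interpF_nat _ (hrle n)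
end
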